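/- arXiv:0709.0897 — 2 statements merged into one kernel-verified Lean document; each statement's English description precedes it below -/
import Mathlib

section
/- Let λ and μ be two partitions with equal hook-length multisets H(λ) = H(μ), and fix a period p less than the number of rows of each. Suppose the remainders λ^(r) and μ^(r) (the partitions formed by all parts beyond the first p) have equal hook-length multisets, and the ∞-partitions formed from the top p rows of λ and μ have equal missing-hook-number multisets. Then the extensions are equal: λ_p − λ_{p+1} = μ_p − μ_{p+1}. -/
/-- A partition: a weakly decreasing list of positive integers. -/
def IsPartition (l : List ℕ) : Prop :=
  l.Pairwise (· ≥ ·) ∧ ∀ x ∈ l, 0 < x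

/-- Hook length of the box in row `i`, column `j` (0-indexed):
arm (number of boxes strictly to the right) + leg (boxes strictly below) + 1. -/
def hook (l : List ℕ) (i j : ℕ) : ℕ :=
  (l.getD i 0 - j) + ((Finset.range l.length).filter (fun k => i < k ∧ j < l.getD k 0)).card

/-- The multiset of all hook lengths of a partition. -/
def hookMultiset (l : List ℕ) : Multiset ℕ :=
  ↑((List.range l.length).flatMap fun i => (List.range (l.getD i 0)).map fun j => hook l i j)

/-- The set of first-column hook lengths. -/
def firstColHooks (l : List ℕ) : Finset ℕ :=
  (Finset.range l.length).image fun i => hook l i 0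

/-- The multiset `{s - t : s ∈ S, t ∈ T, s > t}`. -/
def posDiffs (S T : Finset ℕ) : Multiset ℕ :=
  ((S ×ˢ T).filter fun q => q.2 < q.1).val.map fun q => q.1 - q.2

/-- The remnant of a partition: the complement in the `r × c` rectangle, rotated 180°. -/
def remnant (l : List ℕ) : List ℕ :=
  ((l.reverse).map fun x => l.headD 0 - x).filter fun x => decide (0 < x)

/-- The front section of the first `p` rows: delete all full-height columns but the rightmost. -/
def frontSection (l : List ℕ) (p : ℕ) : List ℕ :=
  (l.take p).map fun v => v + 1 - l.getD (p - 1) 0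

/-- The extension `λ_p - λ_{p+1}` of a partition with respect to period `p`. -/
def extension (l : List ℕ) (p : ℕ) : ℕ :=
  l.getD (p - 1) 0 - l.getD p 0

/-- The multiset of differences `{c_i - c_j : i < j}` of a (decreasing) list. -/
def listDiffs (ch : List ℕ) : Multiset ℕ :=
  ↑((List.range ch.length).flatMap fun i =>
    ((List.range ch.length).filter fun j => decide (i < j)).map fun j => ch.getD i 0 - ch.getD j 0)

/-- The characteristic of a front section: its first-column hook lengths. -/
def charList (fs : List ℕ) : List ℕ :=
  (List.range fs.length).map fun i => hook fs i 0

/-- The multiset of missing hook numbers of the ∞-partition formed from the top `p` rows. -/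
def missingHooks (l : List ℕ) (p : ℕ) : Multiset ℕ :=
  listDiffs (charList (frontSection l p))

/-- Reconstruct a partition from a `p`-partition datum: front section `fs` atop
remainder `rem`, with extension `x`. -/
def assemble (fs rem : List ℕ) (x : ℕ) : List ℕ :=
  (fs.map fun v => v + (rem.headD 0 + x) - 1) ++ rem

/-- Increment the first `p` parts of `l` by `n`. -/
def bump (l : List ℕ) (p n : ℕ) : List ℕ :=
  ((l.take p).map fun v => v + n) ++ l.drop p

/-- The difference multiset `{a i - a j : 1 ≤ i < j ≤ p}` of a (1-indexed) sequence. -/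
def seqDiffs (a : ℕ → ℕ) (p : ℕ) : Multiset ℕ :=
  ((Finset.Icc 1 p ×ˢ Finset.Icc 1 p).filter fun q => q.1 < q.2).val.map fun q => a q.1 - a q.2

/-- Multiplicity of `m` among the hook lengths of the ∞-partition with front section `f`:
the number of rows `i` containing a box (possibly at a negative column `j`) of hook length `m`. -/
noncomputable def infMult (f : List ℕ) (m : ℕ) : ℕ :=
  Set.ncard {i : ℕ | i < f.length ∧ ∃ j : ℤ, j < (f.getD i 0 : ℤ) ∧
    ((f.getD i 0 : ℤ) - j) +
      (((Finset.range f.length).filter fun k => i < k ∧ j < (f.getD k 0 : ℤ)).card : ℤ) = (m : ℤ)}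

/-- The characteristic set of the enveloping ∞-partition `E∞(λ)`:
`{a + t + 1 : a ∈ A} ∪ {a' + 1 : a' ∈ A'}`. -/
def envChar (l : List ℕ) : Finset ℕ :=
  ((firstColHooks l).image fun a => a + (l.length + l.headD 0) + 1) ∪
  (((Finset.range (l.length + l.headD 0)) \ firstColHooks l).image fun a => a + 1)

/-- The missing-hook-number multiset of `E∞(λ)`: all positive pairwise differences
of the characteristic set. -/
def envMissing (l : List ℕ) : Multiset ℕ := posDiffs (envChar l) (envChar l)

/-- Number of parts of `l` exceeding `j`: the `(j+1)`-st part of the conjugate. -/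
def conjPart (l : List ℕ) (j : ℕ) : ℕ :=
  ((Finset.range l.length).filter fun k => j < l.getD k 0).card

/-- The enveloping partition `E(λ)`: a `t × t` square with the rotated reflection of `λ`
removed from the bottom-right, and copies of `λ` adjoined top-right and bottom-left. -/
def envelope (l : List ℕ) : List ℕ :=
  (l.map fun v => v + (l.length + l.headD 0)) ++
  ((List.range (l.headD 0)).map fun i =>
    (l.length + l.headD 0) - conjPart l (l.headD 0 - 1 - i)) ++ l

/-- Iteratively stack `d` copies of the front section `fs` atop `rem`, with extensions `x i`. -/
def stack (fs rem : List ℕ) (x : ℕ → ℕ) : ℕ → List ℕ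
  | 0 => rem
  | (i + 1) => assemble fs (stack fs rem x i) (x (i + 1))

/-!
Write `h₀ > h₁ > ⋯` for the first-column hook lengths of `λ`. The hooks of row `i` together
with the differences `hᵢ - hₖ` (`k > i`) are exactly `1, …, hᵢ`. Summing this over the top `p`
rows gives `H(λ) + D + X = ∑_{i<p} [1, hᵢ] + H(λ^(r))`, where `D = {hᵢ - hₖ : i < k < p}` is the
missing-hook multiset of the ∞-partition and `X = {hᵢ - hₖ : i < p ≤ k}`. Under the hypotheses
this leaves `X_λ + ∑[1, hᵢ(μ)] = X_μ + ∑[1, hᵢ(λ)]`. The least element of `X_λ` is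
`h_{p-1} - h_p = e_λ + 1`, and comparing multiplicities at the smaller of `e_λ + 1`, `e_μ + 1`
(where both interval sums count `p`) shows the two are equal.
-/

open Finset

namespace IsPartition

variable {l : List ℕ} {i j : ℕ}

theorem getD_le_getD (hl : IsPartition l) (hij : i ≤ j) : l.getD j 0 ≤ l.getD i 0 := by
  rcases lt_or_ge j l.length with hj | hj
  · rcases hij.eq_or_lt with rfl | hlt
    · exact le_rfl
    · rw [List.getD_eq_getElem _ _ hj, List.getD_eq_getElem _ _ (hlt.trans hj)]
      exact List.pairwise_iff_getElem.1 hl.1 i j (hlt.trans hj) hj hlt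
  · rw [List.getD_eq_default _ _ hj]
    exact Nat.zero_le _

theorem getD_pos (hl : IsPartition l) (hi : i < l.length) : 0 < l.getD i 0 :=
  hl.2 _ (List.getD_eq_getElem _ _ hi ▸ List.getElem_mem hi)

end IsPartition

theorem List.getD_drop {α : Type*} (l : List α) (d : α) (p i : ℕ) :
    (l.drop p).getD i d = l.getD (p + i) d := by
  simp only [List.getD_eq_getElem?_getD, List.getElem?_drop]

theorem Multiset.map_sub_range (n : ℕ) : (range n).map (n - ·) = Icc 1 n := by
  refine (Nodup.ext ((nodup_range n).map_on fun a ha b hb hab => ?_) nodup_Icc).2 fun t => ?_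
  · simp only [mem_range] at ha hb
    omega
  · simp only [mem_map, mem_range, mem_Icc]
    exact ⟨fun ⟨j, hj, hjt⟩ => by omega, fun ht => ⟨n - t, by omega, by omega⟩⟩

theorem Finset.sum_singleton_eq_map {ι α : Type*} (s : Finset ι) (f : ι → α) :
    ∑ k ∈ s, ({f k} : Multiset α) = s.val.map f := by
  rw [sum_eq_multiset_sum, ← Multiset.sum_map_singleton (s.val.map f), Multiset.map_map]
  rfl

def firstColHook (l : List ℕ) (i : ℕ) : ℕ := l.getD i 0 + (l.length - 1 - i)

/-- This is `firstColHook l i - hook l i j` (see `hook_add_hookCompl`), in a form that is visibly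
strictly increasing in `j`. -/
def hookCompl (l : List ℕ) (i j : ℕ) : ℕ :=
  j + #{k ∈ Ioo i l.length | l.getD k 0 ≤ j}

def pairDiffs (a : ℕ → ℕ) (p : ℕ) : Multiset ℕ := ∑ i ∈ range p, ∑ k ∈ Ioo i p, {a i - a k}

def crossDiffs (a : ℕ → ℕ) (p n : ℕ) : Multiset ℕ := ∑ i ∈ range p, ∑ k ∈ Ico p n, {a i - a k}

def sumIcc (a : ℕ → ℕ) (p : ℕ) : Multiset ℕ := ∑ i ∈ range p, Multiset.Icc 1 (a i)

section

variable {l : List ℕ} {i j k p : ℕ}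

theorem firstColHook_antitone (hl : IsPartition l) : Antitone (firstColHook l) := by
  intro i k hik
  have := hl.getD_le_getD hik
  unfold firstColHook
  omega

theorem firstColHook_strictAntiOn (hl : IsPartition l) :
    StrictAntiOn (firstColHook l) (Set.Iio l.length) := by
  intro i _ k hk hik
  have := hl.getD_le_getD hik.le
  simp only [Set.mem_Iio] at hk
  unfold firstColHook
  omega

theorem hook_zero_eq_firstColHook (hpos : ∀ k < l.length, 0 < l.getD k 0) (i : ℕ) :
    hook l i 0 = firstColHook l i := by
  have : {k ∈ range l.length | i < k ∧ 0 < l.getD k 0} = Ioo i l.length := by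
    ext k
    simp only [mem_filter, mem_range, mem_Ioo]
    exact ⟨fun h => ⟨h.2.1, h.1⟩, fun h => ⟨h.2, h.1, hpos k h.2⟩⟩
  rw [hook, firstColHook, this, Nat.card_Ioo]
  omega

theorem hook_add_hookCompl (hj : j < l.getD i 0) :
    hook l i j + hookCompl l i j = firstColHook l i := by
  have hsplit := card_filter_add_card_filter_not (s := Ioo i l.length)
    (fun k => j < l.getD k 0)
  have hbelow : {k ∈ range l.length | i < k ∧ j < l.getD k 0} =
      {k ∈ Ioo i l.length | j < l.getD k 0} := by
    ext k
    simp only [mem_filter, mem_range, mem_Ioo]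
    tauto
  simp only [not_lt, Nat.card_Ioo] at hsplit
  rw [hook, hookCompl, firstColHook, hbelow]
  omega

theorem hookCompl_strictMono : StrictMono (hookCompl l i) := by
  intro j j' hjj'
  have : #{k ∈ Ioo i l.length | l.getD k 0 ≤ j} ≤ #{k ∈ Ioo i l.length | l.getD k 0 ≤ j'} :=
    card_le_card fun k hk => by
      simp only [mem_filter] at hk ⊢
      exact ⟨hk.1, hk.2.trans hjj'.le⟩
  unfold hookCompl
  omega

theorem hookCompl_lt_firstColHook (hj : j < l.getD i 0) : hookCompl l i j < firstColHook l i := by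
  have := card_filter_le (Ioo i l.length) (fun k => l.getD k 0 ≤ j)
  rw [Nat.card_Ioo] at this
  unfold hookCompl firstColHook
  omega

theorem hookCompl_ne_firstColHook (hl : IsPartition l) (hik : i < k) (hk : k < l.length) :
    hookCompl l i j ≠ firstColHook l k := by
  rcases le_or_gt (l.getD k 0) j with hkj | hjk
  · have hsub : Ico k l.length ⊆ {k' ∈ Ioo i l.length | l.getD k' 0 ≤ j} := fun k' hk' => by
      simp only [mem_Ico] at hk'
      simp only [mem_filter, mem_Ioo]
      exact ⟨⟨by omega, hk'.2⟩, (hl.getD_le_getD hk'.1).trans hkj⟩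
    have := card_le_card hsub
    rw [Nat.card_Ico] at this
    unfold hookCompl firstColHook
    omega
  · have hsub : {k' ∈ Ioo i l.length | l.getD k' 0 ≤ j} ⊆ Ioo k l.length := fun k' hk' => by
      simp only [mem_filter, mem_Ioo] at hk' ⊢
      refine ⟨lt_of_not_ge fun hk'k => ?_, hk'.1.2⟩
      have := hl.getD_le_getD hk'k
      omega
    have := card_le_card hsub
    rw [Nat.card_Ioo] at this
    unfold hookCompl firstColHook
    omega

theorem map_hookCompl_add_map_firstColHook (hl : IsPartition l) (hi : i < l.length) :
    (Multiset.range (l.getD i 0)).map (hookCompl l i) + (Ioo i l.length).val.map (firstColHook l)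
      = Multiset.range (firstColHook l i) := by
  have hnodup : ((Multiset.range (l.getD i 0)).map (hookCompl l i)
      + (Ioo i l.length).val.map (firstColHook l)).Nodup := by
    refine Multiset.nodup_add.2 ⟨(Multiset.nodup_range _).map hookCompl_strictMono.injective,
      (Ioo i l.length).nodup.map_on fun a ha b hb => ?_, ?_⟩
    · simp only [mem_val, mem_Ioo] at ha hb
      exact (firstColHook_strictAntiOn hl).injOn ha.2 hb.2
    · simp only [Multiset.disjoint_left, Multiset.mem_map, Multiset.mem_range, mem_val, mem_Ioo]
      rintro _ ⟨j, -, rfl⟩ ⟨k, hk, hjk⟩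
      exact hookCompl_ne_firstColHook hl hk.1 hk.2 hjk.symm
  refine Multiset.eq_of_le_of_card_le ((Multiset.le_iff_subset hnodup).2 fun t ht => ?_) ?_
  · simp only [Multiset.mem_add, Multiset.mem_map, Multiset.mem_range, mem_val, mem_Ioo] at ht ⊢
    rcases ht with ⟨j, hj, rfl⟩ | ⟨k, hk, rfl⟩
    · exact hookCompl_lt_firstColHook hj
    · exact firstColHook_strictAntiOn hl hi hk.2 hk.1
  · simp only [Multiset.card_range, Multiset.card_add, Multiset.card_map, card_val, Nat.card_Ioo,
      firstColHook]
    omega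

theorem map_hook_add_sum_sub_firstColHook (hl : IsPartition l) (hi : i < l.length) :
    (Multiset.range (l.getD i 0)).map (hook l i)
      + ∑ k ∈ Ioo i l.length, {firstColHook l i - firstColHook l k}
      = Multiset.Icc 1 (firstColHook l i) := by
  have := congrArg (Multiset.map (firstColHook l i - ·)) (map_hookCompl_add_map_firstColHook hl hi)
  rw [Multiset.map_sub_range, Multiset.map_add, Multiset.map_map, Multiset.map_map] at this
  rw [← this, sum_singleton_eq_map]
  congr 1
  refine Multiset.map_congr rfl fun j hj => ?_
  have := hook_add_hookCompl (Multiset.mem_range.1 hj)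
  simp only [Function.comp_apply]
  omega

theorem hook_drop (l : List ℕ) (p i j : ℕ) : hook (l.drop p) i j = hook l (p + i) j := by
  have hleg : #{k ∈ range (l.drop p).length | i < k ∧ j < (l.drop p).getD k 0}
      = #{k ∈ range l.length | p + i < k ∧ j < l.getD k 0} := by
    refine card_nbij' (p + ·) (· - p) ?_ ?_ ?_ ?_ <;> intro k hk <;>
      simp only [coe_filter, Set.mem_ofPred_eq, mem_range, List.length_drop, List.getD_drop] at hk ⊢
    · omega
    · refine ⟨by omega, by omega, ?_⟩
      rw [Nat.add_sub_cancel' (by omega)]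
      exact hk.2.2
    · omega
    · omega
  rw [hook, hook, hleg, List.getD_drop]

theorem hookMultiset_eq_sum (l : List ℕ) :
    hookMultiset l = ∑ i ∈ range l.length, (Multiset.range (l.getD i 0)).map (hook l i) := by
  rw [hookMultiset, ← Multiset.coe_bind, sum_eq_multiset_sum]
  rfl

theorem hookMultiset_drop (l : List ℕ) (p : ℕ) :
    hookMultiset (l.drop p)
      = ∑ i ∈ Ico p l.length, (Multiset.range (l.getD i 0)).map (hook l i) := by
  simp only [hookMultiset_eq_sum, sum_Ico_eq_sum_range, List.length_drop, List.getD_drop,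
    hook_drop]

theorem hookMultiset_add_pairDiffs_add_crossDiffs (hl : IsPartition l)
    (hp : p ≤ l.length) :
    hookMultiset l + pairDiffs (firstColHook l) p + crossDiffs (firstColHook l) p l.length
      = sumIcc (firstColHook l) p + hookMultiset (l.drop p) := by
  have hrow : ∀ i ∈ range p, (Multiset.range (l.getD i 0)).map (hook l i)
      + ∑ k ∈ Ioo i p, {firstColHook l i - firstColHook l k}
      + ∑ k ∈ Ico p l.length, {firstColHook l i - firstColHook l k}
      = Multiset.Icc 1 (firstColHook l i) := fun i hi => by
    rw [mem_range] at hi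
    have hdisj : Disjoint (Ioo i p) (Ico p l.length) := disjoint_left.2 fun k hk hk' => by
      simp only [mem_Ioo, mem_Ico] at hk hk'
      omega
    have hunion : Ioo i p ∪ Ico p l.length = Ioo i l.length := by
      ext k
      simp only [mem_union, mem_Ioo, mem_Ico]
      omega
    rw [add_assoc, ← sum_union hdisj, hunion, map_hook_add_sum_sub_firstColHook hl (by omega)]
  rw [hookMultiset_eq_sum, ← sum_range_add_sum_Ico _ hp, hookMultiset_drop, sumIcc,
    ← sum_congr rfl hrow, sum_add_distrib, sum_add_distrib, pairDiffs, crossDiffs]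
  abel

theorem listDiffs_eq_pairDiffs (ch : List ℕ) :
    listDiffs ch = pairDiffs (ch.getD · 0) ch.length := by
  have hfilter : ∀ i, (((List.range ch.length).filter fun j => decide (i < j) : List ℕ) :
      Multiset ℕ) = (Ioo i ch.length).val := fun i => by
    rw [← Multiset.filter_coe, ← Multiset.range, ← range_val, ← filter_val]
    congr 1
    ext j
    simp only [mem_filter, mem_range, mem_Ioo]
    omega
  rw [listDiffs, ← Multiset.coe_bind, pairDiffs, sum_eq_multiset_sum, Multiset.bind,
    Multiset.join]
  refine congrArg Multiset.sum (Multiset.map_congr rfl fun i _ => ?_)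
  rw [← Multiset.map_coe, hfilter, sum_singleton_eq_map]

theorem length_charList (fs : List ℕ) : (charList fs).length = fs.length := by
  simp [charList]

theorem getD_charList {fs : List ℕ} (hi : i < fs.length) :
    (charList fs).getD i 0 = hook fs i 0 := by
  simp [charList, List.getD_eq_getElem?_getD, hi]

theorem length_frontSection (hp : p ≤ l.length) : (frontSection l p).length = p := by
  simp [frontSection, hp]

theorem getD_frontSection (hi : i < p) (hp : p ≤ l.length) :
    (frontSection l p).getD i 0 = l.getD i 0 + 1 - l.getD (p - 1) 0 := by
  simp [frontSection, List.getD_eq_getElem?_getD, hi, show i < l.length by omega]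

theorem missingHooks_eq_pairDiffs (hl : IsPartition l) (hp : p ≤ l.length) :
    missingHooks l p = pairDiffs (firstColHook l) p := by
  have hfront : ∀ i < p, firstColHook (frontSection l p) i
      = l.getD i 0 + 1 - l.getD (p - 1) 0 + (p - 1 - i) := fun i hi => by
    rw [firstColHook, getD_frontSection hi hp, length_frontSection hp]
  have hpos : ∀ k < (frontSection l p).length, 0 < (frontSection l p).getD k 0 := fun k hk => by
    rw [length_frontSection hp] at hk
    have := hl.getD_le_getD (show k ≤ p - 1 by omega)
    rw [getD_frontSection hk hp]
    omega
  rw [missingHooks, listDiffs_eq_pairDiffs, length_charList, length_frontSection hp]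
  refine sum_congr rfl fun i hi => sum_congr rfl fun k hk => ?_
  simp only [mem_range, mem_Ioo] at hi hk
  have hik := hl.getD_le_getD hk.1.le
  have hkp := hl.getD_le_getD (show k ≤ p - 1 by omega)
  dsimp only
  congr 1
  rw [getD_charList (by rw [length_frontSection hp]; omega),
    getD_charList (by rw [length_frontSection hp]; omega), hook_zero_eq_firstColHook hpos,
    hook_zero_eq_firstColHook hpos, hfront i hi, hfront k hk.2, firstColHook, firstColHook]
  omega

theorem extension_add_one (hl : IsPartition l) (hp : 0 < p) (hpn : p < l.length) :
    extension l p + 1 = firstColHook l (p - 1) - firstColHook l p := by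
  have := hl.getD_le_getD (show p - 1 ≤ p by omega)
  unfold extension firstColHook
  omega

end

section Antitone

variable {a b : ℕ → ℕ} {p n x : ℕ}

theorem count_sumIcc (ha : Antitone a) (hx₀ : 0 < x) (hx : x ≤ a (p - 1)) :
    (sumIcc a p).count x = p := by
  rw [sumIcc, Multiset.count_sum']
  have hone : ∀ i ∈ range p, (Multiset.Icc 1 (a i)).count x = 1 := fun i hi => by
    have := ha (show i ≤ p - 1 by rw [mem_range] at hi; omega)
    exact Multiset.count_eq_one_of_mem Multiset.nodup_Icc (Multiset.mem_Icc.2 ⟨hx₀, by omega⟩)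
  rw [sum_congr rfl hone, sum_const, card_range, smul_eq_mul, mul_one]

theorem sub_le_of_mem_crossDiffs (ha : Antitone a) (hx : x ∈ crossDiffs a p n) :
    a (p - 1) - a p ≤ x := by
  simp only [crossDiffs, Multiset.mem_sum, Multiset.mem_singleton, mem_range, mem_Ico] at hx
  obtain ⟨i, hi, k, hk, rfl⟩ := hx
  have := ha (show i ≤ p - 1 by omega)
  have := ha hk.1
  have := ha (show p - 1 ≤ p by omega)
  omega

theorem sub_mem_crossDiffs (hp : 0 < p) (hpn : p < n) : a (p - 1) - a p ∈ crossDiffs a p n := by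
  simp only [crossDiffs, Multiset.mem_sum, Multiset.mem_singleton, mem_range, mem_Ico]
  exact ⟨p - 1, by omega, p, ⟨le_rfl, hpn⟩, rfl⟩

theorem sub_le_sub_of_crossDiffs_add_sumIcc_eq {n' : ℕ} (ha : Antitone a) (hb : Antitone b)
    (hp : 0 < p) (hpn' : p < n') (hb₀ : 0 < b (p - 1) - b p)
    (h : crossDiffs a p n + sumIcc b p = crossDiffs b p n' + sumIcc a p) :
    a (p - 1) - a p ≤ b (p - 1) - b p := by
  by_contra! hlt
  set x := b (p - 1) - b p
  have hcount := congrArg (Multiset.count x) h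
  have hxa : x ∉ crossDiffs a p n := fun hx => (sub_le_of_mem_crossDiffs ha hx).not_gt hlt
  have hxb : 0 < (crossDiffs b p n').count x := Multiset.count_pos.2 (sub_mem_crossDiffs hp hpn')
  rw [Multiset.count_add, Multiset.count_add, Multiset.count_eq_zero.2 hxa,
    count_sumIcc hb hb₀ (Nat.sub_le _ _), count_sumIcc ha hb₀ (by omega)] at hcount
  omega

end Antitone

/-- Clustered partitions with clustered remainders and clustered ∞-partitions
have equal extensions. -/
theorem stmt11 (l m : List ℕ) (p : ℕ) (hp : 0 < p)
    (hl : IsPartition l) (hm : IsPartition m)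
    (hpl : p < l.length) (hpm : p < m.length)
    (hH : hookMultiset l = hookMultiset m)
    (hrem : hookMultiset (l.drop p) = hookMultiset (m.drop p))
    (hinf : missingHooks l p = missingHooks m p) :
    extension l p = extension m p := by
  have hL := hookMultiset_add_pairDiffs_add_crossDiffs hl hpl.le
  have hM := hookMultiset_add_pairDiffs_add_crossDiffs hm hpm.le
  rw [← missingHooks_eq_pairDiffs hl hpl.le, hinf, missingHooks_eq_pairDiffs hm hpm.le, hH,
    hrem] at hL
  have hcross : crossDiffs (firstColHook l) p l.length + sumIcc (firstColHook m) p
      = crossDiffs (firstColHook m) p m.length + sumIcc (firstColHook l) p := by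
    ext x
    have hLx := congrArg (Multiset.count x) hL
    have hMx := congrArg (Multiset.count x) hM
    simp only [Multiset.count_add] at hLx hMx ⊢
    omega
  have hextl := extension_add_one hl hp hpl
  have hextm := extension_add_one hm hp hpm
  have hle := sub_le_sub_of_crossDiffs_add_sumIcc_eq (firstColHook_antitone hl)
    (firstColHook_antitone hm) hp hpm (by omega) hcross
  have hge := sub_le_sub_of_crossDiffs_add_sumIcc_eq (firstColHook_antitone hm)
    (firstColHook_antitone hl) hp hpl (by omega) hcross.symm
  omega
end

section
/- Let λ be a partition with r rows and c columns, t = r + c, and λ̃ its remnant. Then for every integer i, the multiplicity of i among the hook lengths of λ minus the multiplicity of t−i among the hook lengths of λ equals the multiplicity of i among the hook lengths of λ̃ minus the multiplicity of t−i among the hook lengths of λ̃: H_i(λ) − H_{t−i}(λ) = H_i(λ̃) − H_{t−i}(λ̃). -/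
/-!
Write `A` for the β-set of `λ` and `A' = [0, t) \ A`. The hook lengths of `λ` are the positive
differences `a - a'` with `a ∈ A`, `a' ∈ A'`: peeling off the first row, whose β-number is `h`,
its hooks are the `h - x` for the `x < h` outside the β-set of the remaining rows. Padded with
zero rows (which carry no hooks), the remnant has β-set `t - 1 - A`, so by reflection its hook
lengths are the differences `a' - a`. For `0 < n < t`, the pairs `(a, a')` with difference `n`
outnumber the pairs `(a', a)` with difference `n` by `#{a ∈ A | n ≤ a} - #{a ∈ A | a + n < t}`,
which is invariant under `n ↦ t - n`.
-/

lemma card_filter_range_succ (n : ℕ) (p : ℕ → Prop) [DecidablePred p] :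
    ((Finset.range (n + 1)).filter p).card
      = ((Finset.range n).filter fun k => p (k + 1)).card + if p 0 then 1 else 0 := by
  simp only [Finset.card_filter, Finset.sum_range_succ']

lemma conjPart_cons (a : ℕ) (l : List ℕ) (j : ℕ) :
    conjPart (a :: l) j = conjPart l j + if j < a then 1 else 0 := by
  simp [conjPart, card_filter_range_succ]

lemma hook_cons_zero (a : ℕ) (l : List ℕ) (j : ℕ) :
    hook (a :: l) 0 j = (a - j) + conjPart l j := by
  simp [hook, conjPart, card_filter_range_succ]

lemma hook_cons_succ (a : ℕ) (l : List ℕ) (i j : ℕ) :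
    hook (a :: l) (i + 1) j = hook l i j := by
  simp [hook, card_filter_range_succ]

lemma hookMultiset_cons (a : ℕ) (l : List ℕ) :
    hookMultiset (a :: l)
      = (Multiset.range a).map (fun j => (a - j) + conjPart l j) + hookMultiset l := by
  simp [hookMultiset, List.range_succ_eq_map, List.flatMap_map, hook_cons_zero, hook_cons_succ,
    Multiset.range]

lemma conjPart_filter_pos (l : List ℕ) (j : ℕ) : conjPart (l.filter (0 < ·)) j = conjPart l j := by
  induction l with
  | nil => rfl
  | cons a l ih =>
    rcases Nat.eq_zero_or_pos a with rfl | ha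
    · simp [conjPart_cons, ih]
    · simp [List.filter_cons_of_pos, ha, conjPart_cons, ih]

lemma hookMultiset_filter_pos (l : List ℕ) : hookMultiset (l.filter (0 < ·)) = hookMultiset l := by
  induction l with
  | nil => rfl
  | cons a l ih =>
    rcases Nat.eq_zero_or_pos a with rfl | ha
    · simp [hookMultiset_cons, ih]
    · simp [List.filter_cons_of_pos, ha, hookMultiset_cons, conjPart_filter_pos, ih]

lemma List.Pairwise.getD_le_getD {l : List ℕ} (hl : l.Pairwise (· ≥ ·)) {i j : ℕ} (hij : i ≤ j)
    (hj : j < l.length) : l.getD j 0 ≤ l.getD i 0 := by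
  rcases hij.eq_or_lt with rfl | hlt
  · exact le_rfl
  · rw [List.getD_eq_getElem _ _ hj, List.getD_eq_getElem _ _ (hlt.trans hj)]
    exact List.pairwise_iff_getElem.mp hl i j (hlt.trans hj) hj hlt

lemma List.Pairwise.le_headD {l : List ℕ} (hl : l.Pairwise (· ≥ ·)) : ∀ x ∈ l, x ≤ l.headD 0 := by
  cases l with
  | nil => simp
  | cons a l =>
    intro x hx
    rcases List.mem_cons.mp hx with rfl | hx
    · exact le_rfl
    · exact (List.pairwise_cons.mp hl).1 x hx

lemma List.getD_mem_of_lt {l : List ℕ} {k : ℕ} (hk : k < l.length) : l.getD k 0 ∈ l := by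
  rw [List.getD_eq_getElem _ _ hk]
  exact List.getElem_mem hk

lemma conjPart_le_length (l : List ℕ) (j : ℕ) : conjPart l j ≤ l.length :=
  (Finset.card_filter_le _ _).trans (Finset.card_range _).le

lemma conjPart_anti (l : List ℕ) {j j' : ℕ} (h : j ≤ j') : conjPart l j' ≤ conjPart l j :=
  Finset.card_le_card fun k hk => by
    simp only [Finset.mem_filter] at hk ⊢
    exact ⟨hk.1, by omega⟩

lemma lt_conjPart_iff {l : List ℕ} (hl : l.Pairwise (· ≥ ·)) {j k : ℕ} (hk : k < l.length) :
    k < conjPart l j ↔ j < l.getD k 0 := by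
  constructor
  · intro h
    by_contra! hkj
    have : conjPart l j ≤ (Finset.range k).card := Finset.card_le_card fun m hm => by
      simp only [Finset.mem_filter, Finset.mem_range] at hm ⊢
      by_contra! hkm
      have := hl.getD_le_getD hkm hm.1
      omega
    rw [Finset.card_range] at this
    omega
  · intro h
    have : (Finset.range (k + 1)).card ≤ conjPart l j := Finset.card_le_card fun m hm => by
      simp only [Finset.mem_filter, Finset.mem_range] at hm ⊢
      have := hl.getD_le_getD (Nat.lt_succ_iff.mp hm) hk
      exact ⟨by omega, by omega⟩
    simpa using this

/-- The β-set of `l`; for a partition these are its first-column hook lengths. -/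
def betaSet (l : List ℕ) : Finset ℕ :=
  (Finset.range l.length).image fun i => l.getD i 0 + (l.length - 1 - i)

lemma betaSet_cons (a : ℕ) (l : List ℕ) :
    betaSet (a :: l) = insert (a + l.length) (betaSet l) := by
  ext x
  simp only [betaSet, Finset.mem_image, Finset.mem_range, Finset.mem_insert, List.length_cons]
  constructor
  · rintro ⟨_ | i, hi, rfl⟩
    · simp
    · exact Or.inr ⟨i, by omega, by simp; omega⟩
  · rintro (rfl | ⟨i, hi, rfl⟩)
    · exact ⟨0, by omega, by simp⟩
    · exact ⟨i + 1, by omega, by simp; omega⟩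

lemma card_betaSet {l : List ℕ} (hl : l.Pairwise (· ≥ ·)) : (betaSet l).card = l.length := by
  rw [betaSet, Finset.card_image_of_injOn, Finset.card_range]
  intro i hi j hj hij
  simp only [Finset.coe_range, Set.mem_Iio] at hi hj hij
  rcases lt_trichotomy i j with h | h | h
  · have := hl.getD_le_getD h.le hj; omega
  · exact h
  · have := hl.getD_le_getD h.le hi; omega

lemma betaSet_subset_range {l : List ℕ} {T : ℕ} (hT : ∀ x ∈ l, x + l.length ≤ T) :
    betaSet l ⊆ Finset.range T := by
  intro b hb
  simp only [betaSet, Finset.mem_image, Finset.mem_range] at hb ⊢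
  obtain ⟨i, hi, rfl⟩ := hb
  have := hT _ (List.getD_mem_of_lt hi)
  omega

lemma injective_add_length_sub_conjPart (l : List ℕ) :
    Function.Injective fun j => j + (l.length - conjPart l j) :=
  StrictMono.injective fun j j' h => by
    have := conjPart_anti l h.le
    have := conjPart_le_length l j
    omega

-- The box in column `j` of the first row of `a :: l` has hook length
-- `(a + l.length) - (j + (l.length - conjPart l j))`.
lemma range_sdiff_betaSet_eq_image {a : ℕ} {l : List ℕ} (hl : (a :: l).Pairwise (· ≥ ·)) :
    Finset.range (a + l.length) \ betaSet l
      = (Finset.range a).image fun j => j + (l.length - conjPart l j) := by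
  obtain ⟨hla, hl⟩ := List.pairwise_cons.mp hl
  have hC := conjPart_le_length l
  symm
  apply Finset.eq_of_subset_of_card_le
  · intro x hx
    simp only [Finset.mem_image, Finset.mem_range] at hx
    obtain ⟨j, hj, rfl⟩ := hx
    simp only [betaSet, Finset.mem_sdiff, Finset.mem_range, Finset.mem_image, not_exists, not_and]
    refine ⟨by have := hC j; omega, fun k hk heq => ?_⟩
    have := lt_conjPart_iff hl (j := j) hk
    have := hC j
    omega
  · have hsub : betaSet l ⊆ Finset.range (a + l.length) :=
      betaSet_subset_range fun x hx => by have := hla x hx; omega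
    rw [Finset.card_sdiff_of_subset hsub, card_betaSet hl,
      Finset.card_image_of_injective _ (injective_add_length_sub_conjPart l)]
    simp

lemma posDiffs_insert {S : Finset ℕ} (T : Finset ℕ) {h : ℕ} (hS : h ∉ S) :
    posDiffs (insert h S) T = (T.filter (· < h)).val.map (h - ·) + posDiffs S T := by
  have hdisj : Disjoint (({h} ×ˢ T).filter fun q => q.2 < q.1)
      ((S ×ˢ T).filter fun q => q.2 < q.1) := by
    rw [Finset.disjoint_left]
    intro q hq hq'
    simp only [Finset.mem_filter, Finset.mem_product, Finset.mem_singleton] at hq hq'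
    exact hS (hq.1.1 ▸ hq'.1.1)
  rw [posDiffs, Finset.insert_eq, Finset.union_product, Finset.filter_union,
    ← Finset.disjUnion_eq_union _ _ hdisj, Finset.disjUnion_val, Multiset.map_add, posDiffs,
    Finset.singleton_product, Finset.filter_map, Finset.map_val, Multiset.map_map]
  rfl

lemma posDiffs_congr_right {S T T' : Finset ℕ} (h : ∀ x, (∃ s ∈ S, x < s) → (x ∈ T ↔ x ∈ T')) :
    posDiffs S T = posDiffs S T' := by
  unfold posDiffs
  congr 2
  ext ⟨s, x⟩
  simp only [Finset.mem_filter, Finset.mem_product]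
  constructor
  · rintro ⟨⟨hs, hx⟩, hxs⟩
    exact ⟨⟨hs, (h x ⟨s, hs, hxs⟩).mp hx⟩, hxs⟩
  · rintro ⟨⟨hs, hx⟩, hxs⟩
    exact ⟨⟨hs, (h x ⟨s, hs, hxs⟩).mpr hx⟩, hxs⟩

theorem hookMultiset_eq_posDiffs {l : List ℕ} (hl : l.Pairwise (· ≥ ·)) {T : ℕ}
    (hT : ∀ x ∈ l, x + l.length ≤ T) :
    hookMultiset l = posDiffs (betaSet l) (Finset.range T \ betaSet l) := by
  induction l with
  | nil => simp [hookMultiset, betaSet, posDiffs]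
  | cons a l ih =>
    have hl' := (List.pairwise_cons.mp hl).2
    have hla := (List.pairwise_cons.mp hl).1
    have hbound : ∀ b ∈ betaSet l, b < a + l.length := fun b hb => Finset.mem_range.mp <|
      betaSet_subset_range (fun x hx => by have := hla x hx; omega) hb
    have haT := hT a List.mem_cons_self
    simp only [List.length_cons] at hT haT
    rw [hookMultiset_cons, ih hl' fun x hx => by have := hT x (List.mem_cons_of_mem a hx); omega,
      betaSet_cons, posDiffs_insert _ fun h => (hbound _ h).false]
    congr 1
    · have : (Finset.range T \ insert (a + l.length) (betaSet l)).filter (· < a + l.length)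
          = (Finset.range a).image fun j => j + (l.length - conjPart l j) := by
        rw [← range_sdiff_betaSet_eq_image hl]
        ext x
        simp only [Finset.mem_filter, Finset.mem_sdiff, Finset.mem_range, Finset.mem_insert]
        by_cases hx : x ∈ betaSet l <;> simp [hx]; omega
      rw [this, Finset.image_val_of_injOn (injective_add_length_sub_conjPart l).injOn,
        Multiset.map_map, Finset.range_val]
      refine Multiset.map_congr rfl fun j hj => ?_
      have := Multiset.mem_range.mp hj
      have := conjPart_le_length l j
      simp only [Function.comp_apply]
      omega
    · exact posDiffs_congr_right fun x ⟨s, hs, hxs⟩ => by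
        have := hbound s hs
        simp only [Finset.mem_sdiff, Finset.mem_insert, Finset.mem_range]
        by_cases hx : x ∈ betaSet l <;> simp [hx]; omega

section Reflection

variable {N : ℕ} {S T : Finset ℕ}

lemma range_sdiff_image_reflect (hS : S ⊆ Finset.range N) :
    Finset.range N \ S.image (N - 1 - ·) = (Finset.range N \ S).image (N - 1 - ·) := by
  ext x
  simp only [Finset.mem_sdiff, Finset.mem_range, Finset.mem_image]
  constructor
  · rintro ⟨hx, hxS⟩
    refine ⟨N - 1 - x, ⟨by omega, fun h => hxS ⟨_, h, by omega⟩⟩, by omega⟩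
  · rintro ⟨y, ⟨hy, hyS⟩, rfl⟩
    refine ⟨by omega, ?_⟩
    rintro ⟨z, hz, hzy⟩
    have := Finset.mem_range.mp (hS hz)
    exact hyS (by rwa [show y = z by omega])

lemma posDiffs_image_reflect (hS : S ⊆ Finset.range N) (hT : T ⊆ Finset.range N) :
    posDiffs (S.image (N - 1 - ·)) (T.image (N - 1 - ·)) = posDiffs T S := by
  have hinj : Set.InjOn (fun q : ℕ × ℕ => (N - 1 - q.2, N - 1 - q.1)) ↑(T ×ˢ S) := by
    rintro ⟨u, s⟩ hq ⟨u', s'⟩ hq' h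
    simp only [Finset.coe_product, Set.mem_prod, Finset.mem_coe] at hq hq'
    have := Finset.mem_range.mp (hT hq.1); have := Finset.mem_range.mp (hS hq.2)
    have := Finset.mem_range.mp (hT hq'.1); have := Finset.mem_range.mp (hS hq'.2)
    simp only [Prod.mk.injEq] at h
    ext <;> simp only <;> omega
  have himage : ((S.image (N - 1 - ·) ×ˢ T.image (N - 1 - ·)).filter fun q => q.2 < q.1)
      = ((T ×ˢ S).filter fun q => q.2 < q.1).image fun q => (N - 1 - q.2, N - 1 - q.1) := by
    ext ⟨x, y⟩
    simp only [Finset.mem_filter, Finset.mem_product, Finset.mem_image, Prod.mk.injEq,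
      Prod.exists]
    constructor
    · rintro ⟨⟨⟨s, hs, rfl⟩, ⟨u, hu, rfl⟩⟩, hlt⟩
      have := Finset.mem_range.mp (hT hu); have := Finset.mem_range.mp (hS hs)
      exact ⟨u, s, ⟨⟨hu, hs⟩, by omega⟩, rfl, rfl⟩
    · rintro ⟨u, s, ⟨⟨hu, hs⟩, hlt⟩, rfl, rfl⟩
      have := Finset.mem_range.mp (hT hu); have := Finset.mem_range.mp (hS hs)
      exact ⟨⟨⟨s, hs, rfl⟩, ⟨u, hu, rfl⟩⟩, by omega⟩
  rw [posDiffs, himage, Finset.image_val_of_injOn (hinj.mono (Finset.filter_subset _ _)),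
    Multiset.map_map, posDiffs]
  refine Multiset.map_congr rfl fun q hq => ?_
  simp only [Finset.mem_val, Finset.mem_filter, Finset.mem_product] at hq
  have := Finset.mem_range.mp (hT hq.1.1); have := Finset.mem_range.mp (hS hq.1.2)
  simp only [Function.comp_apply]
  omega

end Reflection

lemma betaSet_reverse_map_sub {l : List ℕ} {c : ℕ} (hc : ∀ x ∈ l, x ≤ c) :
    betaSet (l.reverse.map (c - ·)) = (betaSet l).image (l.length + c - 1 - ·) := by
  ext x
  have hget : ∀ i < l.length, (l.reverse.map (c - ·)).getD i 0 = c - l.getD (l.length - 1 - i) 0 :=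
    fun i hi => by
      rw [List.getD_eq_getElem _ _ (by simpa), List.getElem_map, List.getElem_reverse,
        List.getD_eq_getElem _ _ (by omega)]
  simp only [betaSet, Finset.mem_image, Finset.mem_range, List.length_map, List.length_reverse]
  constructor
  · rintro ⟨i, hi, rfl⟩
    have := hc _ (List.getD_mem_of_lt (show l.length - 1 - i < l.length by omega))
    exact ⟨_, ⟨l.length - 1 - i, by omega, rfl⟩, by rw [hget i hi]; omega⟩
  · rintro ⟨_, ⟨i, hi, rfl⟩, rfl⟩
    have := hc _ (List.getD_mem_of_lt hi)
    refine ⟨l.length - 1 - i, by omega, ?_⟩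
    rw [hget _ (by omega), show l.length - 1 - (l.length - 1 - i) = i by omega]
    omega

theorem hookMultiset_remnant {l : List ℕ} (hl : l.Pairwise (· ≥ ·)) :
    hookMultiset (remnant l)
      = posDiffs (Finset.range (l.length + l.headD 0) \ betaSet l) (betaSet l) := by
  have hc := hl.le_headD
  have hsorted : (l.reverse.map (l.headD 0 - ·)).Pairwise (· ≥ ·) :=
    List.pairwise_map.mpr <| List.pairwise_reverse.mpr <| hl.imp fun h => Nat.sub_le_sub_left h _
  have hbound : ∀ x ∈ l.reverse.map (l.headD 0 - ·), x + (l.reverse.map (l.headD 0 - ·)).length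
      ≤ l.length + l.headD 0 := by
    simp only [List.mem_map, List.mem_reverse, List.length_map, List.length_reverse]
    rintro _ ⟨y, -, rfl⟩
    omega
  have hA : betaSet l ⊆ Finset.range (l.length + l.headD 0) :=
    betaSet_subset_range fun x hx => by have := hc x hx; omega
  rw [remnant, hookMultiset_filter_pos, hookMultiset_eq_posDiffs hsorted hbound,
    betaSet_reverse_map_sub hc, range_sdiff_image_reflect hA,
    posDiffs_image_reflect hA Finset.sdiff_subset]

section Counting

variable {S T A : Finset ℕ} {t n : ℕ}

lemma mem_posDiffs_bounds (hS : S ⊆ Finset.range t) {x : ℕ} (hx : x ∈ posDiffs S T) :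
    0 < x ∧ x < t := by
  simp only [posDiffs, Multiset.mem_map, Finset.mem_val, Finset.mem_filter,
    Finset.mem_product] at hx
  obtain ⟨⟨s, u⟩, ⟨⟨hs, -⟩, hus⟩, rfl⟩ := hx
  have := Finset.mem_range.mp (hS hs)
  omega

lemma count_cast_posDiffs_eq_zero (hS : S ⊆ Finset.range t) {i : ℤ} (hi : i ≤ 0 ∨ t ≤ i) :
    ((posDiffs S T).map (Nat.cast : ℕ → ℤ)).count i = 0 := by
  rw [Multiset.count_eq_zero, Multiset.mem_map]
  rintro ⟨x, hx, rfl⟩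
  have := mem_posDiffs_bounds hS hx
  omega

lemma count_posDiffs_of_pos (hn : 0 < n) :
    (posDiffs S T).count n = (T.filter (· + n ∈ S)).card := by
  rw [posDiffs, Multiset.count_map, ← Finset.filter_val, Finset.card_val, Finset.filter_filter]
  refine Finset.card_nbij' Prod.snd (fun u => (u + n, u)) ?_ ?_ ?_ ?_
  · rintro ⟨s, u⟩ h
    simp only [Finset.mem_coe, Finset.mem_filter, Finset.mem_product] at h ⊢
    exact ⟨h.1.2, by rw [show u + n = s by omega]; exact h.1.1⟩
  · intro u h
    simp only [Finset.mem_coe, Finset.mem_filter, Finset.mem_product] at h ⊢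
    exact ⟨⟨h.2, h.1⟩, by omega, by omega⟩
  · rintro ⟨s, u⟩ h
    simp only [Finset.mem_coe, Finset.mem_filter, Finset.mem_product] at h
    simp only [Prod.mk.injEq, and_true]
    omega
  · intro u _
    rfl

lemma card_filter_add_mem (hA : A ⊆ Finset.range t) :
    ((Finset.range t).filter (· + n ∈ A)).card = (A.filter (n ≤ ·)).card := by
  refine Finset.card_nbij' (· + n) (· - n) ?_ ?_ ?_ ?_
  · intro u h
    simp only [Finset.mem_coe, Finset.mem_filter, Finset.mem_range] at h ⊢
    exact ⟨h.2, by omega⟩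
  · intro a h
    simp only [Finset.mem_coe, Finset.mem_filter, Finset.mem_range] at h ⊢
    have := Finset.mem_range.mp (hA h.1)
    exact ⟨by omega, by rw [Nat.sub_add_cancel h.2]; exact h.1⟩
  · intro u _
    simp
  · intro a h
    simp only [Finset.mem_coe, Finset.mem_filter] at h
    exact Nat.sub_add_cancel h.2

lemma count_posDiffs_sub_count_posDiffs_compl (hA : A ⊆ Finset.range t) (hn : 0 < n) :
    ((posDiffs A (Finset.range t \ A)).count n : ℤ) - (posDiffs (Finset.range t \ A) A).count n
      = (A.filter (n ≤ ·)).card - (A.filter (· + n < t)).card := by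
  rw [count_posDiffs_of_pos hn, count_posDiffs_of_pos hn]
  have hdown : ((Finset.range t \ A).filter (· + n ∈ A)).card + (A.filter (· + n ∈ A)).card
      = (A.filter (n ≤ ·)).card := by
    rw [← Finset.card_union_of_disjoint (Finset.disjoint_filter_filter Finset.sdiff_disjoint),
      ← Finset.filter_union, Finset.sdiff_union_of_subset hA, card_filter_add_mem hA]
  have hup : (A.filter (· + n ∈ Finset.range t \ A)).card + (A.filter (· + n ∈ A)).card
      = (A.filter (· + n < t)).card := by
    rw [← Finset.card_union_of_disjoint, ← Finset.filter_or]
    · congr 1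
      refine Finset.filter_congr fun a _ => ?_
      simp only [Finset.mem_sdiff, Finset.mem_range]
      by_cases h : a + n ∈ A
      · simp [h, Finset.mem_range.mp (hA h)]
      · simp [h]
    · exact Finset.disjoint_filter.mpr fun a _ h h' => (Finset.mem_sdiff.mp h).2 h'
  omega

lemma card_filter_le_sub_card_filter_lt_symm (hA : A ⊆ Finset.range t) (hn : n ≤ t) :
    ((A.filter (n ≤ ·)).card : ℤ) - (A.filter (· + n < t)).card
      = (A.filter (t - n ≤ ·)).card - (A.filter (· + (t - n) < t)).card := by
  simp only [Finset.card_filter, Nat.cast_sum, ← Finset.sum_sub_distrib]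
  refine Finset.sum_congr rfl fun a ha => ?_
  have := Finset.mem_range.mp (hA ha)
  split_ifs <;> push_cast <;> omega

theorem count_posDiffs_compl_sub_count_symm (hA : A ⊆ Finset.range t) (i : ℤ) :
    (((posDiffs A (Finset.range t \ A)).map (Nat.cast : ℕ → ℤ)).count i : ℤ)
        - ((posDiffs A (Finset.range t \ A)).map (Nat.cast : ℕ → ℤ)).count (t - i)
      = (((posDiffs (Finset.range t \ A) A).map (Nat.cast : ℕ → ℤ)).count i : ℤ)
        - ((posDiffs (Finset.range t \ A) A).map (Nat.cast : ℕ → ℤ)).count (t - i) := by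
  have hA' : Finset.range t \ A ⊆ Finset.range t := Finset.sdiff_subset
  by_cases hi : 0 < i ∧ i < t
  · obtain ⟨n, rfl⟩ : ∃ n : ℕ, i = n := ⟨i.toNat, by omega⟩
    rw [show (t : ℤ) - n = ((t - n : ℕ) : ℤ) by omega]
    simp only [Multiset.count_map_eq_count' _ _ Nat.cast_injective]
    have := count_posDiffs_sub_count_posDiffs_compl hA (n := n) (by omega)
    have := count_posDiffs_sub_count_posDiffs_compl hA (n := t - n) (by omega)
    have := card_filter_le_sub_card_filter_lt_symm hA (n := n) (by omega)
    omega
  · have hi' : i ≤ 0 ∨ t ≤ i := by omega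
    have hti : t - i ≤ 0 ∨ t ≤ t - i := by omega
    rw [count_cast_posDiffs_eq_zero hA hi', count_cast_posDiffs_eq_zero hA hti,
      count_cast_posDiffs_eq_zero hA' hi', count_cast_posDiffs_eq_zero hA' hti]

end Counting

theorem stmt17_general (l : List ℕ) (hl : IsPartition l) :
    ∀ i : ℤ,
      (Multiset.count i ((hookMultiset l).map (Nat.cast : ℕ → ℤ)) : ℤ)
        - Multiset.count (((l.length + l.headD 0 : ℕ) : ℤ) - i)
            ((hookMultiset l).map (Nat.cast : ℕ → ℤ))
      = (Multiset.count i ((hookMultiset (remnant l)).map (Nat.cast : ℕ → ℤ)) : ℤ)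
        - Multiset.count (((l.length + l.headD 0 : ℕ) : ℤ) - i)
            ((hookMultiset (remnant l)).map (Nat.cast : ℕ → ℤ)) := by
  have hbound : ∀ x ∈ l, x + l.length ≤ l.length + l.headD 0 := fun x hx => by
    have := hl.1.le_headD x hx
    omega
  rw [hookMultiset_eq_posDiffs hl.1 hbound, hookMultiset_remnant hl.1]
  exact count_posDiffs_compl_sub_count_symm (betaSet_subset_range hbound)

/-- `H_i(λ) - H_{t-i}(λ) = H_i(λ̃) - H_{t-i}(λ̃)` for every integer `i`. -/
theorem stmt17 (l : List ℕ) (hl : IsPartition l) (hne : l ≠ []) :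
    ∀ i : ℤ,
      (Multiset.count i ((hookMultiset l).map (Nat.cast : ℕ → ℤ)) : ℤ)
        - Multiset.count (((l.length + l.headD 0 : ℕ) : ℤ) - i)
            ((hookMultiset l).map (Nat.cast : ℕ → ℤ))
      = (Multiset.count i ((hookMultiset (remnant l)).map (Nat.cast : ℕ → ℤ)) : ℤ)
        - Multiset.count (((l.length + l.headD 0 : ℕ) : ℤ) - i)
            ((hookMultiset (remnant l)).map (Nat.cast : ℕ → ℤ)) :=
  stmt17_general l hl
end
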